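/- Let n > 1 be a square-free integer. Let σ be the cyclic permutation (2 3 ⋯ n) of {1,…,n} (fixing 1), and for 1 ≤ m ≤ n−1 let F_m be the permutation matrix of σ^m. Then the set {F_1,…,F_{n−1}} of n−1 mutually orthogonal binary frequency squares of type (n;n−1,1) is maximal: for every μ with 1 ≤ μ ≤ n−1, there is no binary frequency square of type (n;n−μ,μ) orthogonal to every F_m. -/
import Mathlib


open Finset

/-- A binary frequency square of type `(n; n - lam1, lam1)`: an `n × n` `(0,1)`-matrix
with exactly `lam1` ones (hence `n - lam1` zeros) in every row and every column. -/
def IsBFS (n lam1 : ℕ) (F : Fin n → Fin n → ℕ) : Prop :=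
  (∀ i j, F i j = 0 ∨ F i j = 1) ∧
  (∀ i : Fin n, (univ.filter (fun j => F i j = 1)).card = lam1) ∧
  (∀ j : Fin n, (univ.filter (fun i => F i j = 1)).card = lam1)

/-- Two binary frequency squares (with `lam1` resp. `mu1` ones per row and column)
are orthogonal: the number of cells in which both have entry 1 equals `lam1 * mu1`. -/
def OrthBFS (n lam1 mu1 : ℕ) (F G : Fin n → Fin n → ℕ) : Prop :=
  ((univ : Finset (Fin n × Fin n)).filter
    (fun p => F p.1 p.2 = 1 ∧ G p.1 p.2 = 1)).card = lam1 * mu1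

/-- The image of `r ∈ {0, …, d-1}` under the `m`-th power of the cyclic permutation
`(1 2 ⋯ (d-1))` of `{0, …, d-1}` fixing `0` (in 1-based notation, the cycle
`(2 3 ⋯ d)` of `{1, …, d}` fixing `1`). -/
def cycPow (d m r : ℕ) : ℕ := if r = 0 then 0 else 1 + ((r - 1 + m) % (d - 1))

/-- The `n × n` matrix obtained from the permutation matrix of the `m`-th power of the
cycle `(2 3 ⋯ d)` by dilation: every entry is replaced by the `lam × lam` constant
block with that entry (here `n = d * lam`). -/
def dilCyc (n d lam m : ℕ) (i j : Fin n) : ℕ :=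
  if (j : ℕ) / lam = cycPow d m ((i : ℕ) / lam) then 1 else 0

lemma cycPow_lt {n : ℕ} (hn : 1 < n) (m r : ℕ) : cycPow n m r < n := by
  unfold cycPow
  split
  · omega
  · have : (r - 1 + m) % (n - 1) < n - 1 := Nat.mod_lt _ (by omega)
    omega

def cycF {n : ℕ} (hn : 1 < n) (m : ℕ) (i : Fin n) : Fin n :=
  ⟨cycPow n m (i : ℕ), cycPow_lt hn m (i : ℕ)⟩

lemma mod_range_cancel {k m m' : ℕ} (hm1 : 1 ≤ m) (hm2 : m ≤ k) (hm1' : 1 ≤ m')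
    (hm2' : m' ≤ k) (h : m % k = m' % k) : m = m' := by
  by_cases hm : m = k
  · by_cases hm' : m' = k
    · omega
    · rw [hm, Nat.mod_self, Nat.mod_eq_of_lt (by omega)] at h; omega
  · by_cases hm' : m' = k
    · rw [hm', Nat.mod_self, Nat.mod_eq_of_lt (by omega)] at h; omega
    · rw [Nat.mod_eq_of_lt (by omega), Nat.mod_eq_of_lt (by omega)] at h; exact h

lemma dilCyc_eq_one_iff {n : ℕ} (hn : 1 < n) (m : ℕ) (i j : Fin n) :
    dilCyc n n 1 m i j = 1 ↔ j = cycF hn m i := by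
  unfold dilCyc cycF
  rw [Fin.ext_iff]
  simp [Nat.div_one]

lemma cycF_zero {n : ℕ} (hn : 1 < n) (m : ℕ) (i : Fin n) (hi : (i : ℕ) = 0) :
    cycF hn m i = ⟨0, by omega⟩ := by
  unfold cycF cycPow
  simp [hi]

lemma cycF_ne_zero {n : ℕ} (hn : 1 < n) (m : ℕ) (i : Fin n) (hi : (i : ℕ) ≠ 0) :
    ((cycF hn m i : Fin n) : ℕ) ≠ 0 := by
  unfold cycF cycPow
  simp [hi]

lemma cycF_injective {n : ℕ} (hn : 1 < n) (m : ℕ) : Function.Injective (cycF hn m) := by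
  intro a b h
  unfold cycF at h
  rw [Fin.mk.injEq] at h
  unfold cycPow at h
  have ha := a.isLt
  have hb := b.isLt
  ext
  split_ifs at h with h1 h2 h2
  · omega
  · omega
  · omega
  · have hmod : ((a : ℕ) - 1 + m) % (n - 1) = ((b : ℕ) - 1 + m) % (n - 1) := by omega
    have hc : (a : ℕ) - 1 ≡ (b : ℕ) - 1 [MOD n - 1] :=
      Nat.ModEq.add_right_cancel' m hmod
    have := hc.eq_of_lt_of_lt (by omega) (by omega)
    omega

lemma cycF_m_inj {n : ℕ} (hn : 1 < n) {m m' : ℕ} (hm1 : 1 ≤ m) (hm2 : m ≤ n - 1)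
    (hm1' : 1 ≤ m') (hm2' : m' ≤ n - 1) (i : Fin n) (hi : (i : ℕ) ≠ 0)
    (h : cycF hn m i = cycF hn m' i) : m = m' := by
  unfold cycF at h
  rw [Fin.mk.injEq] at h
  unfold cycPow at h
  rw [if_neg hi, if_neg hi] at h
  have hmod : ((i : ℕ) - 1 + m) % (n - 1) = ((i : ℕ) - 1 + m') % (n - 1) := by omega
  have hc : m ≡ m' [MOD n - 1] := Nat.ModEq.add_left_cancel' ((i : ℕ) - 1) hmod
  exact mod_range_cancel hm1 hm2 hm1' hm2' hc

lemma sum_eq_card_filter {α : Type*} [Fintype α] (f : α → ℕ)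
    (h : ∀ x, f x = 0 ∨ f x = 1) :
    ∑ x, f x = (univ.filter (fun x => f x = 1)).card := by
  rw [Finset.card_filter]
  exact Finset.sum_congr rfl fun x _ => by rcases h x with h' | h' <;> simp [h']

lemma orth_sum {n : ℕ} (hn : 1 < n) (m : ℕ) (G : Fin n → Fin n → ℕ)
    (h01 : ∀ i j, G i j = 0 ∨ G i j = 1) (mu : ℕ)
    (horth : ((univ : Finset (Fin n × Fin n)).filter
      (fun p => dilCyc n n 1 m p.1 p.2 = 1 ∧ G p.1 p.2 = 1)).card = 1 * mu) :
    ∑ i : Fin n, G i (cycF hn m i) = mu := by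
  rw [one_mul] at horth
  rw [← horth, Finset.card_filter, Fintype.sum_prod_type]
  refine Finset.sum_congr rfl fun i _ => ?_
  have : ∀ j : Fin n, (if dilCyc n n 1 m i j = 1 ∧ G i j = 1 then 1 else 0) =
      (if j = cycF hn m i then (if G i j = 1 then 1 else 0) else 0) := by
    intro j
    simp only [dilCyc_eq_one_iff hn, ite_and]
  rw [Finset.sum_congr rfl (fun j _ => this j), Finset.sum_ite_eq' univ (cycF hn m i)]
  rw [if_pos (mem_univ _)]
  rcases h01 i (cycF hn m i) with h' | h' <;> simp [h']

/-- For square-free `n > 1`, the permutation matrices of the powers of the cycle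
`(2 3 ⋯ n)` form a set of `n-1` mutually orthogonal binary frequency squares of type
`(n; n-1, 1)` which is maximal: for every `mu` with `1 ≤ mu ≤ n - 1`, no binary
frequency square of type `(n; n - mu, mu)` is orthogonal to every member of the set.
(Here `dilCyc n n 1 m` is precisely the permutation matrix of the `m`-th power of
the cycle, since dilation by `1` is trivial.) -/
theorem stmt4 (n : ℕ) (hn : 1 < n) (hsf : Squarefree n) :
    (∀ m, 1 ≤ m → m ≤ n - 1 → IsBFS n 1 (dilCyc n n 1 m)) ∧
    (∀ m m', 1 ≤ m → m ≤ n - 1 → 1 ≤ m' → m' ≤ n - 1 → m ≠ m' →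
      OrthBFS n 1 1 (dilCyc n n 1 m) (dilCyc n n 1 m')) ∧
    (∀ mu : ℕ, 1 ≤ mu → mu ≤ n - 1 →
      ¬ ∃ G : Fin n → Fin n → ℕ, IsBFS n mu G ∧
        ∀ m, 1 ≤ m → m ≤ n - 1 → OrthBFS n 1 mu (dilCyc n n 1 m) G) := by
  have hz0 : (0 : ℕ) < n := by omega
  set z : Fin n := ⟨0, hz0⟩ with hzdef
  refine ⟨?_, ?_, ?_⟩
  · -- Part 1
    intro m hm1 hm2
    refine ⟨fun i j => ?_, fun i => ?_, fun j => ?_⟩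
    · unfold dilCyc; split <;> simp
    · have : univ.filter (fun j => dilCyc n n 1 m i j = 1) = {cycF hn m i} := by
        ext j
        simp [dilCyc_eq_one_iff hn]
      rw [this, Finset.card_singleton]
    · obtain ⟨i0, hi0⟩ := (Finite.injective_iff_bijective.mp (cycF_injective hn m)).2 j
      have : univ.filter (fun i => dilCyc n n 1 m i j = 1) = {i0} := by
        ext x
        simp only [Finset.mem_filter, Finset.mem_singleton, mem_univ, true_and,
          dilCyc_eq_one_iff hn]
        constructor
        · intro h
          exact cycF_injective hn m (h.symm.trans hi0.symm)
        · rintro rfl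
          exact hi0.symm
      rw [this, Finset.card_singleton]
  · -- Part 2
    intro m m' hm1 hm2 hm1' hm2' hne
    unfold OrthBFS
    have : (univ : Finset (Fin n × Fin n)).filter
        (fun p => dilCyc n n 1 m p.1 p.2 = 1 ∧ dilCyc n n 1 m' p.1 p.2 = 1) = {(z, z)} := by
      ext p
      simp only [Finset.mem_filter, Finset.mem_singleton, mem_univ, true_and,
        dilCyc_eq_one_iff hn, Prod.ext_iff]
      constructor
      · rintro ⟨h1, h2⟩
        have hcc : cycF hn m p.1 = cycF hn m' p.1 := h1.symm.trans h2
        by_cases hp : (p.1 : ℕ) = 0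
        · have hp1 : p.1 = z := Fin.ext hp
          refine ⟨hp1, ?_⟩
          rw [h1, hp1, cycF_zero hn m z rfl]
        · exact absurd (cycF_m_inj hn hm1 hm2 hm1' hm2' p.1 hp hcc) hne
      · rintro ⟨h1, h2⟩
        rw [h1, h2, cycF_zero hn m z rfl, cycF_zero hn m' z rfl]
        exact ⟨rfl, rfl⟩
    rw [this, Finset.card_singleton]
  · -- Part 3
    intro mu hmu1 hmu2
    rintro ⟨G, ⟨h01, hrow, hcol⟩, horth⟩
    have hrowsum : ∀ i, ∑ j, G i j = mu :=
      fun i => (sum_eq_card_filter _ (h01 i)).trans (hrow i)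
    have hcolsum : ∀ j, ∑ i, G i j = mu :=
      fun j => (sum_eq_card_filter (fun i => G i j) (fun i => h01 i j)).trans (hcol j)
    have hcardIcc : (Finset.Icc 1 (n - 1)).card = n - 1 := by
      rw [Nat.card_Icc]; omega
    have hcardE : (univ.erase z).card = n - 1 := by
      rw [Finset.card_erase_of_mem (mem_univ z), Finset.card_univ, Fintype.card_fin]
    have hA : ∀ m ∈ Finset.Icc 1 (n - 1),
        G z z + ∑ i ∈ univ.erase z, G i (cycF hn m i) = mu := by
      intro m hm
      rw [Finset.mem_Icc] at hm
      have h1 := orth_sum hn m G h01 mu (horth m hm.1 hm.2)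
      rw [← h1, ← Finset.add_sum_erase univ (fun i => G i (cycF hn m i)) (mem_univ z)]
      congr 1
    have himg : ∀ i : Fin n, i ≠ z →
        ∑ m ∈ Finset.Icc 1 (n - 1), G i (cycF hn m i) = ∑ j ∈ univ.erase z, G i j := by
      intro i hi
      have hi' : (i : ℕ) ≠ 0 := fun h => hi (Fin.ext h)
      have hinj : ∀ m ∈ Finset.Icc 1 (n - 1), ∀ m' ∈ Finset.Icc 1 (n - 1),
          cycF hn m i = cycF hn m' i → m = m' := by
        intro m hm m' hm'
        rw [Finset.mem_Icc] at hm hm'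
        exact cycF_m_inj hn hm.1 hm.2 hm'.1 hm'.2 i hi'
      have hsub : (Finset.Icc 1 (n - 1)).image (fun m => cycF hn m i) ⊆ univ.erase z := by
        intro j hj
        rw [Finset.mem_image] at hj
        obtain ⟨m, _, rfl⟩ := hj
        rw [Finset.mem_erase]
        exact ⟨fun h => cycF_ne_zero hn m i hi' (congrArg Fin.val h), mem_univ _⟩
      have hcards : (univ.erase z).card ≤
          ((Finset.Icc 1 (n - 1)).image (fun m => cycF hn m i)).card := by
        rw [Finset.card_image_of_injOn
          (fun m hm m' hm' => hinj m (by simpa using hm) m' (by simpa using hm')),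
          hcardIcc, hcardE]
      have heq : (Finset.Icc 1 (n - 1)).image (fun m => cycF hn m i) = univ.erase z :=
        Finset.eq_of_subset_of_card_le hsub hcards
      rw [← heq, Finset.sum_image hinj]
    have hrow' : ∀ i, G i z + ∑ j ∈ univ.erase z, G i j = mu := fun i => by
      rw [Finset.add_sum_erase univ (fun j => G i j) (mem_univ z)]
      exact hrowsum i
    -- equation 1
    have hE1 : (n - 1) * G z z + ∑ i ∈ univ.erase z, ∑ j ∈ univ.erase z, G i j
        = (n - 1) * mu := by
      have h1 : ∑ m ∈ Finset.Icc 1 (n - 1),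
          (G z z + ∑ i ∈ univ.erase z, G i (cycF hn m i)) = (n - 1) * mu := by
        rw [Finset.sum_congr rfl hA, Finset.sum_const, hcardIcc, smul_eq_mul]
      rw [Finset.sum_add_distrib, Finset.sum_const, hcardIcc, smul_eq_mul,
        Finset.sum_comm] at h1
      rw [← h1]
      congr 1
      exact Finset.sum_congr rfl fun i hi => (himg i (Finset.mem_erase.mp hi).1).symm
    -- equation 2
    have hE2 : (∑ i ∈ univ.erase z, G i z) +
        ∑ i ∈ univ.erase z, ∑ j ∈ univ.erase z, G i j = (n - 1) * mu := by
      rw [← Finset.sum_add_distrib, Finset.sum_congr rfl (fun i _ => hrow' i),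
        Finset.sum_const, hcardE, smul_eq_mul]
    -- equation 3 (column z)
    have hE3 : G z z + ∑ i ∈ univ.erase z, G i z = mu := by
      rw [Finset.add_sum_erase univ (fun i => G i z) (mem_univ z)]
      exact hcolsum z
    have key : (n - 1) * G z z + ∑ i ∈ univ.erase z, ∑ j ∈ univ.erase z, G i j
        = (∑ i ∈ univ.erase z, G i z) +
          ∑ i ∈ univ.erase z, ∑ j ∈ univ.erase z, G i j := by
      rw [hE1, hE2]
    have hB : (n - 1) * G z z = ∑ i ∈ univ.erase z, G i z :=
      Nat.add_right_cancel key
    rcases h01 z z with h0 | h0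
    · rw [h0, Nat.mul_zero] at hB
      rw [h0, ← hB] at hE3
      omega
    · rw [h0, Nat.mul_one] at hB
      rw [h0, ← hB] at hE3
      omega
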